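/- arXiv:1111.3845 — 2 statements merged into one kernel-verified Lean document; each statement's English description precedes it below -/
import Mathlib

section
/- Let A be a ring, S a set, E an equivalence relation on S, and suppose a family (a_x)_{x∈S} of elements of A, with finite support, satisfies ∑_{x' ∈ x̄} a_{x'} = 0 for every equivalence class x̄ ∈ S/E. Then the element ∑_{x∈S} a_x·x of the free A-module on S lies in the submodule generated by {x' − x : (x,x') ∈ E}. -/
/-!
Mapping every point to a chosen representative of its class sends `a` to `0`, because the class
sums vanish, while `a` minus its image is a combination of the differences `x - rep x`.
-/

open scoped Classical

namespace Finsupp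

variable {S T M R : Type*}

theorem mapDomain_eq_zero_of_sum_fiber_eq_zero [AddCommMonoid M] [DecidableEq T]
    (g : S → T) (a : S →₀ M)
    (h : ∀ t, ∑ x ∈ a.support.filter (fun x => g x = t), a x = 0) : a.mapDomain g = 0 := by
  ext t
  by_cases ht : t ∈ Set.range g
  · obtain ⟨x, rfl⟩ := ht
    rw [mapDomain_apply_eq_sum, h, zero_apply]
  · rw [mapDomain_of_notMem_range a t ht, zero_apply]

theorem sub_mapDomain_mem_span_single_sub_single [Ring R] (r : S → S → Prop) (f : S → S)
    (hf : ∀ x, r (f x) x) (a : S →₀ R) :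
    a - a.mapDomain f ∈ Submodule.span R
      {v : S →₀ R | ∃ x x' : S, r x x' ∧ v = single x' 1 - single x 1} := by
  induction a using Finsupp.induction_linear with
  | zero => simp
  | add a b ha hb =>
    rw [mapDomain_add, add_sub_add_comm]
    exact Submodule.add_mem _ ha hb
  | single x c =>
    have hgen : single x c - (single x c).mapDomain f = c • (single x 1 - single (f x) 1) := by
      rw [mapDomain_single, smul_sub, smul_single_one, smul_single_one]
    rw [hgen]
    exact Submodule.smul_mem _ c (Submodule.subset_span ⟨f x, x, hf x, rfl⟩)

end Finsupp

/-- If a finitely supported family `(a_x)_{x∈S}` in `A` satisfies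
`∑_{x' ∈ x̄} a_{x'} = 0` for every equivalence class `x̄ ∈ S/E`, then `∑ a_x · x`
lies in the submodule generated by the elements `x' - x` with `(x,x') ∈ E`. -/
theorem stmt3 (A : Type*) [Ring A] (S : Type*) (E : Setoid S) (a : S →₀ A)
    (h : ∀ c : Quotient E,
      (∑ x ∈ a.support.filter (fun x => Quotient.mk E x = c), a x) = 0) :
    a ∈ Submodule.span A
        {f : S →₀ A | ∃ x x' : S, E.r x x' ∧
          f = Finsupp.single x' (1 : A) - Finsupp.single x (1 : A)} := by
  have hrep : a.mapDomain (fun x => (Quotient.mk E x).out) = 0 := by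
    rw [← Function.comp_def, Finsupp.mapDomain_comp,
      Finsupp.mapDomain_eq_zero_of_sum_fiber_eq_zero _ a h, Finsupp.mapDomain_zero]
  have hdiff := Finsupp.sub_mapDomain_mem_span_single_sub_single E.r _
    (fun x => Quotient.exact (Quotient.out_eq _)) a
  rwa [hrep, sub_zero] at hdiff
end

section
/- Let k be a commutative ring, A a k-algebra, Q a quiver, and R a set of pairs of parallel paths of Q. For each pair of vertices i,j, the component at (i,j) of the two-sided ideal ⟨R⟩_A of the quiver algebra AQ generated by the elements g − h with (g,h) ∈ R equals the A-submodule of AQ(i,j) generated by the elements g − h with (g,h) ∈ R^#(i,j), where R^# is the congruence on ℙQ generated by R. -/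
open Quiver Finsupp

/-- Convolution composition in the quiver algebra `AQ`: hom-spaces are the free
`A`-modules on paths, and composition is induced by concatenation of paths
(coefficients multiply in `A`, the coefficient of the later factor on the left). -/
noncomputable def pcomp {V : Type} [Quiver.{1} V] {A : Type*} [Ring A] {i j l : V}
    (f : Path i j →₀ A) (g : Path j l →₀ A) : Path i l →₀ A :=
  f.sum fun p fp => g.sum fun q gq => Finsupp.single (p.comp q) (gq * fp)

/-- The closure `R^c` of a set of pairs of parallel paths under pre- and
post-composition with arbitrary paths. -/
def PRc {V : Type} [Quiver.{1} V] (R : ∀ ⦃i j : V⦄, Path i j → Path i j → Prop) :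
    ∀ ⦃i j : V⦄, Path i j → Path i j → Prop :=
  fun {i j} p q =>
    ∃ (i' j' : V) (α : Path i i') (a b : Path i' j') (β : Path j' j),
      R a b ∧ p = (α.comp a).comp β ∧ q = (α.comp b).comp β

/-- The congruence `R^#` on the free category `ℙQ` generated by `R`: on each hom-set
the equivalence relation generated by `R^c`. -/
def PRsharp {V : Type} [Quiver.{1} V] (R : ∀ ⦃i j : V⦄, Path i j → Path i j → Prop) :
    ∀ ⦃i j : V⦄, Path i j → Path i j → Prop :=
  fun {i j} p q => Relation.EqvGen (fun p' q' : Path i j => PRc R p' q') p q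

/-!
Up to a scalar, the generator `α (p - q) β` of `⟨R⟩_A` is `αpβ - αqβ` with `(αpβ, αqβ) ∈ R^c`, so
`⟨R⟩_A(i,j)` is the span of the differences `g - h` with `(g, h) ∈ R^c`. Differences along a chain
of `R^c`-steps telescope, and `h - g = -(g - h)`, so passing to the equivalence relation `R^#`
generated by `R^c` does not change the span.
-/

theorem Submodule.span_sub_eqvGen {S M X : Type*} [Ring S] [AddCommGroup M] [Module S M]
    (v : X → M) (r : X → X → Prop) :
    span S {m | ∃ a b, Relation.EqvGen r a b ∧ m = v a - v b}
      = span S {m | ∃ a b, r a b ∧ m = v a - v b} := by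
  refine le_antisymm ?_ (span_mono ?_)
  · rw [span_le]
    rintro _ ⟨a, b, hab, rfl⟩
    rw [SetLike.mem_coe]
    induction hab with
    | rel a b h => exact subset_span ⟨a, b, h, rfl⟩
    | refl a => simp
    | symm a b _ ih => simpa only [neg_sub] using neg_mem ih
    | trans a b c _ _ ihab ihbc => simpa only [sub_add_sub_cancel] using add_mem ihab ihbc
  · rintro _ ⟨a, b, h, rfl⟩
    exact ⟨a, b, .rel a b h, rfl⟩

section pcomp

variable {V : Type} [Quiver.{1} V] {A : Type*} [Ring A]

lemma pcomp_single_single {i j l : V} (a : Path i j) (b : Path j l) (x y : A) :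
    pcomp (single a x) (single b y) = single (a.comp b) (y * x) := by
  simp [pcomp]

lemma pcomp_sub_left {i j l : V} (f f' : Path i j →₀ A) (g : Path j l →₀ A) :
    pcomp (f - f') g = pcomp f g - pcomp f' g :=
  sum_sub_index fun p x x' => by simp only [mul_sub, single_sub, sum_sub]

lemma pcomp_sub_right {i j l : V} (f : Path i j →₀ A) (g g' : Path j l →₀ A) :
    pcomp f (g - g') = pcomp f g - pcomp f g' := by
  simp only [pcomp, ← sum_sub]
  refine sum_congr fun p _ => sum_sub_index fun q y y' => by rw [sub_mul, single_sub]

lemma pcomp_single_pcomp_single_sub_single {i i' j' j : V}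
    (α : Path i i') (p q : Path i' j') (β : Path j' j) (x y : A) :
    pcomp (single α x) (pcomp (single p (1 : A) - single q 1) (single β y))
      = (y * x) • (single ((α.comp p).comp β) (1 : A) - single ((α.comp q).comp β) 1) := by
  simp only [pcomp_sub_left, pcomp_sub_right, pcomp_single_single, smul_sub, smul_single,
    Path.comp_assoc, smul_eq_mul, mul_one]

end pcomp

theorem stmt8_general (A : Type*) [Ring A]
    (V : Type) [Quiver.{1} V] (R : ∀ ⦃i j : V⦄, Path i j → Path i j → Prop)
    (i j : V) :
    Submodule.span A
        {f : Path i j →₀ A | ∃ (i' j' : V) (x y : A)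
          (α : Path i i') (p q : Path i' j') (β : Path j' j), R p q ∧
          f = pcomp (Finsupp.single α x)
                (pcomp (Finsupp.single p (1 : A) - Finsupp.single q (1 : A))
                  (Finsupp.single β y))}
      = Submodule.span A
          {f : Path i j →₀ A | ∃ g h : Path i j, PRsharp R g h ∧
            f = Finsupp.single g (1 : A) - Finsupp.single h (1 : A)} := by
  unfold PRsharp
  rw [Submodule.span_sub_eqvGen]
  apply le_antisymm
  · rw [Submodule.span_le]
    rintro f ⟨i', j', x, y, α, p, q, β, hR, rfl⟩
    rw [pcomp_single_pcomp_single_sub_single]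
    exact Submodule.smul_mem _ _
      (Submodule.subset_span ⟨_, _, ⟨i', j', α, p, q, β, hR, rfl, rfl⟩, rfl⟩)
  · rw [Submodule.span_le]
    rintro f ⟨_, _, ⟨i', j', α, p, q, β, hR, rfl, rfl⟩, rfl⟩
    refine Submodule.subset_span ⟨i', j', 1, 1, α, p, q, β, hR, ?_⟩
    rw [pcomp_single_pcomp_single_sub_single, mul_one, one_smul]

/-- The component at `(i,j)` of the two-sided ideal `⟨R⟩_A`
of the quiver algebra `AQ` generated by the elements `g - h` with `(g,h) ∈ R`
equals the `A`-submodule of `AQ(i,j)` generated by the `g - h` with `(g,h) ∈ R^#(i,j)`. -/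
theorem stmt8 (k : Type*) [CommRing k] (A : Type*) [Ring A] [Algebra k A]
    (V : Type) [Quiver.{1} V] (R : ∀ ⦃i j : V⦄, Path i j → Path i j → Prop)
    (i j : V) :
    Submodule.span A
        {f : Path i j →₀ A | ∃ (i' j' : V) (x y : A)
          (α : Path i i') (p q : Path i' j') (β : Path j' j), R p q ∧
          f = pcomp (Finsupp.single α x)
                (pcomp (Finsupp.single p (1 : A) - Finsupp.single q (1 : A))
                  (Finsupp.single β y))}
      = Submodule.span A
          {f : Path i j →₀ A | ∃ g h : Path i j, PRsharp R g h ∧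
            f = Finsupp.single g (1 : A) - Finsupp.single h (1 : A)} :=
  stmt8_general A V R i j
end
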